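/- Consider the discrete KdV flow ∂v/∂t = −(1/4)∂_x R(v² − 4u), ∂u/∂t = 0, and the first extended flow ∂v/∂τ = ∂_x[−v³/24 + uv/2 − (1/8)R(R^{−1}v·(v²−4u)) − (ε²/32)R(v·∂_x²R(v²−4u))], ∂u/∂τ = u·u_x, where R = (2/(iε∂_x))·(Λ−1)/(Λ+1) with Λ = e^{iε∂_x}. In the dispersionless limit ε = 0 (where R = 1), these two flows on pairs of functions (u(x), v(x)) commute: the flows ∂v/∂t = −(1/4)∂_x(v²−4u) = −(1/2)v·v_x + u_x, ∂u/∂t = 0 and ∂v/∂τ = ∂_x(−v³/24 + uv/2 − (1/8)v(v²−4u)) = ∂_x(−v³/6 + uv), ∂u/∂τ = u·u_x satisfy D_t D_τ v = D_τ D_t v and D_t D_τ u = D_τ D_t u as identities of differential polynomials in u, v. -/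

import Mathlib

open MvPolynomial

/-! Differential polynomials in two variables `u, v` over ℂ: elements of
`ℂ[[u₀,v₀]][u₁,v₁,u₂,v₂,…]`, modeled as `MvPolynomial (Fin 2 × ℕ) (MvPowerSeries (Fin 2) ℂ)`
where the variable `X (i,n)` stands for `u_{n+1}` (if `i = 0`) or `v_{n+1}` (if `i = 1`),
and the coefficient ring consists of power series in `u₀, v₀`. -/

/-- The ring of differential polynomials in two variables. -/
abbrev DiffPoly2 := MvPolynomial (Fin 2 × ℕ) (MvPowerSeries (Fin 2) ℂ)

/-- Partial derivative of a power series in `u₀,v₀` with respect to the `i`-th variable. -/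
noncomputable def mvDeriv (i : Fin 2) (f : MvPowerSeries (Fin 2) ℂ) :
    MvPowerSeries (Fin 2) ℂ :=
  fun e => (e i + 1) • MvPowerSeries.coeff (e + Finsupp.single i 1) f

/-- `∂/∂u₀` (for `i = 0`) resp. `∂/∂v₀` (for `i = 1`) on differential polynomials. -/
noncomputable def dV0 (i : Fin 2) (p : DiffPoly2) : DiffPoly2 :=
  p.support.sum fun m => monomial m (mvDeriv i (coeff m p))

/-- The total `x`-derivative `∂_x`, determined by `∂_x u_n = u_{n+1}`, `∂_x v_n = v_{n+1}`. -/
noncomputable def dX2 (p : DiffPoly2) : DiffPoly2 :=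
  (∑ i : Fin 2, X (i, 0) * dV0 i p) + ∑ w ∈ p.vars, pderiv w p * X (w.1, w.2 + 1)

/-- The partial linearization along the `i`-th variable family:
`∑_{n≥0} (∂q/∂(u or v)_n) ∂_x^n g`. -/
noncomputable def lin2 (i : Fin 2) (q g : DiffPoly2) : DiffPoly2 :=
  dV0 i q * g + ∑ w ∈ q.vars.filter (fun w => w.1 = i), pderiv w q * dX2^[w.2 + 1] g

/-- The evolutionary derivation attached to a flow `∂u/∂t = a`, `∂v/∂t = b`. -/
noncomputable def evolDer (a b p : DiffPoly2) : DiffPoly2 :=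
  lin2 0 p a + lin2 1 p b

/-- The element `u₀`. -/
noncomputable def uu : DiffPoly2 := MvPolynomial.C (MvPowerSeries.X 0)

/-- The element `v₀`. -/
noncomputable def vv : DiffPoly2 := MvPolynomial.C (MvPowerSeries.X 1)

/-! Every component of both flows is of hydrodynamic type, `a₀(u,v) u_x + a₁(u,v) v_x`
(`hydroType ![a₀, a₁]`). Such a density depends only on `u₀, v₀, u₁, v₁`, so `∂_x` and the
evolutionary derivations act on it by first-order formulas, and both sides of each identity become
explicit polynomials in `u₁, v₁, u₂, v₂` over `ℂ[[u₀, v₀]]` that agree by a ring computation.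
The coefficientwise derivative `mvDeriv` is Mathlib's derivation `MvPowerSeries.pderiv`. -/

open MvPolynomial

local notation "R2" => MvPowerSeries (Fin 2) ℂ
local notation "∂" => MvPowerSeries.pderiv ℂ

lemma mvDeriv_eq_pderiv (i : Fin 2) (f : R2) : mvDeriv i f = ∂ i f := by
  ext e
  rw [MvPowerSeries.coeff_pderiv, ← Nat.cast_succ, mul_comm, ← nsmul_eq_mul]
  rfl

lemma dV0_eq_sum (i : Fin 2) (p : DiffPoly2) :
    dV0 i p = (AddMonoidAlgebra.coeff p).sum fun m c => monomial m (∂ i c) := by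
  simp only [dV0, mvDeriv_eq_pderiv, MvPolynomial.sum_def]

lemma dV0_add (i : Fin 2) (p q : DiffPoly2) : dV0 i (p + q) = dV0 i p + dV0 i q := by
  simp only [dV0_eq_sum, AddMonoidAlgebra.coeff_add]
  exact Finsupp.sum_add_index' (by simp) (by simp)

lemma dV0_monomial (i : Fin 2) (m : Fin 2 × ℕ →₀ ℕ) (c : R2) :
    dV0 i (monomial m c) = monomial m (∂ i c) := by
  rw [dV0_eq_sum, sum_monomial_eq (by simp)]

lemma dV0_C (i : Fin 2) (c : R2) : dV0 i (C c) = C (∂ i c) := by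
  rw [← monomial_zero', dV0_monomial, monomial_zero']

lemma dV0_C_mul_X (i : Fin 2) (c : R2) (w : Fin 2 × ℕ) :
    dV0 i (C c * X w) = C (∂ i c) * X w := by
  rw [C_mul_X_eq_monomial, C_mul_X_eq_monomial, dV0_monomial]

lemma lin2_eq_of_vars_subset {q : DiffPoly2} (hq : q.vars ⊆ {(0, 0), (1, 0)}) (i : Fin 2)
    (g : DiffPoly2) : lin2 i q g = dV0 i q * g + pderiv (i, 0) q * dX2 g := by
  have hfilter : q.vars.filter (fun w => w.1 = i) ⊆ {(i, 0)} := fun w hw => by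
    have := hq (Finset.mem_filter.mp hw).1
    grind
  rw [lin2, Finset.sum_subset hfilter fun w hw hw' => ?_, Finset.sum_singleton,
    Function.iterate_one]
  rw [Finset.mem_singleton.mp hw] at hw' ⊢
  rw [pderiv_eq_zero_of_notMem_vars fun h => hw' (Finset.mem_filter.mpr ⟨h, rfl⟩), zero_mul]

lemma dX2_eq_of_vars_subset {q : DiffPoly2} (hq : q.vars ⊆ {(0, 0), (1, 0)}) :
    dX2 q = ∑ i, X (i, 0) * dV0 i q + ∑ i, pderiv (i, 0) q * X (i, 1) := by
  rw [dX2, Finset.sum_subset hq fun w _ hw => by rw [pderiv_eq_zero_of_notMem_vars hw, zero_mul]]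
  simp [Fin.sum_univ_two]

noncomputable def hydroType (a : Fin 2 → R2) : DiffPoly2 := ∑ j, C (a j) * X (j, 0)

lemma vars_hydroType_subset (a : Fin 2 → R2) : (hydroType a).vars ⊆ {(0, 0), (1, 0)} := by
  classical
  refine (vars_sum_subset _ _).trans (Finset.biUnion_subset.mpr fun j _ => ?_)
  refine (vars_mul _ _).trans ?_
  fin_cases j <;> simp

lemma dV0_hydroType (i : Fin 2) (a : Fin 2 → R2) :
    dV0 i (hydroType a) = hydroType fun j => ∂ i (a j) := by
  simp only [hydroType, Fin.sum_univ_two, dV0_add, dV0_C_mul_X]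

lemma pderiv_hydroType (i : Fin 2) (a : Fin 2 → R2) :
    pderiv (i, 0) (hydroType a) = C (a i) := by
  fin_cases i <;> simp [hydroType, pderiv_X]

lemma dX2_C (f : R2) : dX2 (C f) = hydroType fun i => ∂ i f := by
  simp [dX2, dV0_C, hydroType, mul_comm]

lemma dX2_hydroType (a : Fin 2 → R2) : dX2 (hydroType a)
    = ∑ i, X (i, 0) * hydroType (fun j => ∂ i (a j)) + ∑ i, C (a i) * X (i, 1) := by
  simp only [dX2_eq_of_vars_subset (vars_hydroType_subset a), dV0_hydroType, pderiv_hydroType]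

lemma evolDer_hydroType (g₀ g₁ : DiffPoly2) (c : Fin 2 → R2) :
    evolDer g₀ g₁ (hydroType c) = hydroType (fun j => ∂ 0 (c j)) * g₀ + C (c 0) * dX2 g₀
      + (hydroType (fun j => ∂ 1 (c j)) * g₁ + C (c 1) * dX2 g₁) := by
  simp only [evolDer, lin2_eq_of_vars_subset (vars_hydroType_subset c), dV0_hydroType,
    pderiv_hydroType]

/-- the dispersionless (ε = 0) discrete KdV flow
`∂u/∂t = 0`, `∂v/∂t = −(1/2)v·v_x + u_x` commutes with the dispersionless first
extended flow `∂u/∂τ = u·u_x`, `∂v/∂τ = ∂_x(−v³/6 + u·v)`: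
`D_t D_τ = D_τ D_t` on both `u` and `v`. -/
theorem dispersionless_flows_commute :
    let Au : DiffPoly2 := 0
    let Av : DiffPoly2 := (-(1 / 2) : ℂ) • (vv * X (1, 0)) + X (0, 0)
    let Bu : DiffPoly2 := uu * X (0, 0)
    let Bv : DiffPoly2 := dX2 ((-(1 / 6) : ℂ) • vv ^ 3 + uu * vv)
    evolDer Au Av Bu = evolDer Bu Bv Au ∧ evolDer Au Av Bv = evolDer Bu Bv Av := by
  intro Au Av Bu Bv
  have hAu : Au = hydroType 0 := by simp [Au, hydroType]
  have hAv : Av = hydroType ![1, (-(1 / 2) : ℂ) • MvPowerSeries.X 1] := by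
    simp [Av, hydroType, vv, Algebra.smul_def, add_comm]
    ring
  have hBu : Bu = hydroType ![MvPowerSeries.X 0, 0] := by simp [Bu, hydroType, uu]
  have hBv : Bv = hydroType
      ![MvPowerSeries.X 1, MvPowerSeries.X 0 + (-(1 / 2) : ℂ) • MvPowerSeries.X 1 ^ 2] := by
    have hdensity : ((-(1 / 6) : ℂ) • vv ^ 3 + uu * vv : DiffPoly2)
        = C ((-(1 / 6) : ℂ) • MvPowerSeries.X 1 ^ 3 + MvPowerSeries.X 0 * MvPowerSeries.X 1) := by
      simp only [uu, vv, Algebra.smul_def, MvPolynomial.algebraMap_apply, map_add, map_mul, map_pow]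
    rw [show Bv = dX2 _ from rfl, hdensity, dX2_C]
    congr 1
    ext j : 1
    fin_cases j <;> simp [-nsmul_eq_mul]
    module
  rw [hAu, hAv, hBu, hBv]
  simp only [evolDer_hydroType, dX2_hydroType]
  simp [hydroType, Fin.sum_univ_two, Algebra.smul_def, map_ofNat]
  ring
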